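/- Let ℋ be a complex Hilbert space with Hilbert (orthonormal) basis (e_n)_{n∈ℕ} and let (E_n)_{n∈ℕ} be real numbers with E_1 < E_2 < ⋯ < 0 and ∑_n E_n² < ∞. Let K be the diagonal operator with domain D(K) = {φ ∈ ℋ : ∑_n E_n^{-2} |⟨e_n,φ⟩|² < ∞} acting by Kφ = ∑_n E_n^{-1} ⟨e_n,φ⟩ e_n, and define T_d on 𝓕 := span{e_n : n∈ℕ} by T_d φ := i ∑_n ( ∑_{m≠n} ⟨e_m,φ⟩/(E_n^{-1} − E_m^{-1}) ) e_n. Then T_d is well defined (the coefficient family is square-summable for each φ ∈ 𝓕), symmetric on 𝓕, and for every ψ ∈ ℰ := span{e_n − e_m : n,m ∈ ℕ} one has T_dψ ∈ D(K), Kψ ∈ 𝓕, and K(T_dψ) − T_d(Kψ) = −iψ. -/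

import Mathlib

open scoped InnerProductSpace

/-- The coefficient `∑_{m ≠ n} ⟨e_m, φ⟩ / (λ_n - λ_m)` of the Galapon/Arai–Matsuzawa
time operator associated with the eigenvalue sequence `λ`. -/
noncomputable def timeOpCoeff {ℋ : Type*} [NormedAddCommGroup ℋ] [InnerProductSpace ℂ ℋ]
    (e : HilbertBasis ℕ ℂ ℋ) (lam : ℕ → ℝ) (φ : ℋ) (n : ℕ) : ℂ :=
  ∑' m : ℕ, if m = n then 0 else ⟪e m, φ⟫_ℂ / ((lam n : ℂ) - (lam m : ℂ))

/-- The Galapon/Arai–Matsuzawa time operator `Tφ = i ∑_n c_n(φ) e_n` associated with the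
eigenvalue sequence `λ`. -/
noncomputable def timeOp {ℋ : Type*} [NormedAddCommGroup ℋ] [InnerProductSpace ℂ ℋ]
    (e : HilbertBasis ℕ ℂ ℋ) (lam : ℕ → ℝ) (φ : ℋ) : ℋ :=
  Complex.I • ∑' n : ℕ, timeOpCoeff e lam φ n • e n

/-- The action of the diagonal operator `diag(λ)`: `φ ↦ ∑_n λ_n ⟨e_n, φ⟩ e_n`. -/
noncomputable def diagOp {ℋ : Type*} [NormedAddCommGroup ℋ] [InnerProductSpace ℂ ℋ]
    (e : HilbertBasis ℕ ℂ ℋ) (lam : ℕ → ℝ) (φ : ℋ) : ℋ :=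
  ∑' n : ℕ, ((lam n : ℂ) * ⟪e n, φ⟫_ℂ) • e n

/-- The domain `{φ : ∑_n λ_n² |⟨e_n, φ⟩|² < ∞}` of the diagonal operator `diag(λ)`. -/
def diagDom {ℋ : Type*} [NormedAddCommGroup ℋ] [InnerProductSpace ℂ ℋ]
    (e : HilbertBasis ℕ ℂ ℋ) (lam : ℕ → ℝ) : Set ℋ :=
  {φ | Summable fun n : ℕ => (lam n) ^ 2 * ‖⟪e n, φ⟫_ℂ‖ ^ 2}

section Aux

variable {ℋ : Type*} [NormedAddCommGroup ℋ] [InnerProductSpace ℂ ℋ] [CompleteSpace ℋ]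
  (e : HilbertBasis ℕ ℂ ℋ)

/-- inner products with a fixed orthonormal basis vector -/
lemma inner_basis (n m : ℕ) : ⟪e n, e m⟫_ℂ = if n = m then 1 else 0 :=
  orthonormal_iff_ite.mp e.orthonormal n m

/-- finite support of coefficients for span elements -/
lemma finsupp_of_mem_span {φ : ℋ} (hφ : φ ∈ Submodule.span ℂ (Set.range e)) :
    ∃ t : Finset ℕ, ∀ m ∉ t, ⟪e m, φ⟫_ℂ = 0 := by
  induction hφ using Submodule.span_induction with
  | mem x hx =>
    obtain ⟨k, rfl⟩ := hx
    refine ⟨{k}, fun m hm => ?_⟩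
    rw [inner_basis e, if_neg (Finset.mem_singleton.not.mp hm)]
  | zero => exact ⟨∅, fun m _ => by simp⟩
  | add x y _ _ hx hy =>
    obtain ⟨t1, h1⟩ := hx; obtain ⟨t2, h2⟩ := hy
    exact ⟨t1 ∪ t2, fun m hm => by
      rw [inner_add_right, h1 m (fun h => hm (Finset.mem_union_left _ h)),
        h2 m (fun h => hm (Finset.mem_union_right _ h)), add_zero]⟩
  | smul a x _ hx =>
    obtain ⟨t, h⟩ := hx
    exact ⟨t, fun m hm => by rw [inner_smul_right, h m hm, mul_zero]⟩

lemma coeff_formula (lam : ℕ → ℝ) (φ : ℋ) (n : ℕ) (t : Finset ℕ)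
    (ht : ∀ m ∉ t, ⟪e m, φ⟫_ℂ = 0) :
    timeOpCoeff e lam φ n
      = ∑ m ∈ t, if m = n then 0 else ⟪e m, φ⟫_ℂ / ((lam n : ℂ) - (lam m : ℂ)) := by
  refine tsum_eq_sum fun m hm => ?_
  rw [ht m hm]
  simp

lemma summable_smul_of_l2 (c : ℕ → ℂ) (h : Summable fun n => ‖c n‖ ^ 2) :
    Summable fun n => c n • e n := by
  have key := e.orthonormal.orthogonalFamily.summable_iff_norm_sq_summable c
  simp only [LinearIsometry.toSpanSingleton_apply] at key
  exact key.2 h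

lemma inner_tsum_smul (c : ℕ → ℂ) (h : Summable fun n => c n • e n) (k : ℕ) :
    ⟪e k, ∑' n : ℕ, c n • e n⟫_ℂ = c k := by
  rw [show (⟪e k, ∑' n : ℕ, c n • e n⟫_ℂ) = (innerSL ℂ (e k)) (∑' n : ℕ, c n • e n) from rfl,
    (innerSL ℂ (e k)).map_tsum h]
  have h2 : ∀ n : ℕ, (innerSL ℂ (e k)) (c n • e n) = if n = k then c k else 0 := by
    intro n
    rw [innerSL_apply_apply, inner_smul_right, inner_basis e]
    rcases eq_or_ne n k with h | h
    · simp [h]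
    · simp [h, Ne.symm h]
  rw [tsum_congr h2, tsum_ite_eq]

end Aux

section Gap

variable (E : ℕ → ℝ)

/-- minimal gap around `E m` -/
noncomputable def gapE (m : ℕ) : ℝ :=
  if m = 0 then E 1 - E 0 else min (E (m + 1) - E m) (E m - E (m - 1))

variable {E}

lemma gapE_pos (hmono : StrictMono E) (m : ℕ) : 0 < gapE E m := by
  unfold gapE
  rcases Nat.eq_zero_or_pos m with h | h
  · simp [h, sub_pos.2 (hmono Nat.zero_lt_one)]
  · rw [if_neg h.ne']
    exact lt_min (sub_pos.2 (hmono (Nat.lt_succ_self m)))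
      (sub_pos.2 (hmono (Nat.sub_lt h Nat.one_pos)))

lemma gapE_le (hmono : StrictMono E) {n m : ℕ} (h : n ≠ m) : gapE E m ≤ |E n - E m| := by
  rcases lt_or_gt_of_ne h with hlt | hgt
  · have hm : m ≠ 0 := by omega
    have h1 : E n ≤ E (m - 1) := hmono.monotone (by omega)
    have h2 : E n < E m := hmono hlt
    rw [abs_of_neg (sub_neg.2 h2)]
    unfold gapE
    rw [if_neg hm]
    exact (min_le_right _ _).trans (by linarith)
  · have h1 : E (m + 1) ≤ E n := hmono.monotone (by omega)
    have h2 : E m < E n := hmono hgt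
    rw [abs_of_pos (sub_pos.2 h2)]
    unfold gapE
    rcases Nat.eq_zero_or_pos m with h0 | h0
    · subst h0
      simp only [if_pos rfl, if_true, eq_self_iff_true, zero_add] at h1 ⊢
      linarith
    · rw [if_neg h0.ne']
      exact (min_le_left _ _).trans (by linarith)

lemma inv_sub_inv_ge (hmono : StrictMono E) (hneg : ∀ n, E n < 0) {n m : ℕ} (h : n ≠ m) :
    gapE E m / (|E n| * |E m|) ≤ |(E n)⁻¹ - (E m)⁻¹| := by
  have hn := (hneg n).ne
  have hm := (hneg m).ne
  have h1 : (E n)⁻¹ - (E m)⁻¹ = (E m - E n) / (E n * E m) := by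
    field_simp
  rw [h1, abs_div, abs_mul, abs_sub_comm]
  gcongr
  exact gapE_le hmono h

lemma denom_ne_zero (hmono : StrictMono E) {n m : ℕ} (h : n ≠ m) :
    (((E n)⁻¹ : ℝ) : ℂ) - (((E m)⁻¹ : ℝ) : ℂ) ≠ 0 := by
  rw [← Complex.ofReal_sub, Ne, Complex.ofReal_eq_zero, sub_eq_zero]
  exact fun hinv => h (hmono.injective (inv_injective hinv))

/-- per-term bound on the time operator coefficients -/
lemma term_bound (hmono : StrictMono E) (hneg : ∀ n, E n < 0) (b : ℕ → ℂ) {n m : ℕ} (h : n ≠ m) :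
    ‖b m / ((((E n)⁻¹ : ℝ) : ℂ) - (((E m)⁻¹ : ℝ) : ℂ))‖
      ≤ ‖b m‖ * (|E m| / gapE E m) * |E n| := by
  have hg := gapE_pos hmono (E := E) m
  have hn := abs_pos.2 (hneg n).ne
  have hm := abs_pos.2 (hneg m).ne
  rw [norm_div, ← Complex.ofReal_sub, Complex.norm_real, Real.norm_eq_abs]
  have hge := inv_sub_inv_ge hmono hneg h
  have hpos : 0 < gapE E m / (|E n| * |E m|) := div_pos hg (mul_pos hn hm)
  calc ‖b m‖ / |(E n)⁻¹ - (E m)⁻¹| ≤ ‖b m‖ / (gapE E m / (|E n| * |E m|)) := by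
        gcongr
      _ = ‖b m‖ * (|E m| / gapE E m) * |E n| := by
        field_simp

end Gap

section Main

variable {ℋ : Type*} [NormedAddCommGroup ℋ] [InnerProductSpace ℂ ℋ] [CompleteSpace ℋ]
  (e : HilbertBasis ℕ ℂ ℋ) {E : ℕ → ℝ}

/-- the ℓ² bound for arbitrary finitely supported coefficient data -/
lemma l2_coeff (hmono : StrictMono E) (hneg : ∀ n, E n < 0)
    (hsum : Summable fun n : ℕ => (E n) ^ 2) (b : ℕ → ℂ) (t : Finset ℕ) :
    Summable fun n : ℕ =>
      ‖∑ m ∈ t, if m = n then 0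
        else b m / ((((E n)⁻¹ : ℝ) : ℂ) - (((E m)⁻¹ : ℝ) : ℂ))‖ ^ 2 := by
  set C := ∑ m ∈ t, ‖b m‖ * (|E m| / gapE E m) with hC
  have hC0 : 0 ≤ C := Finset.sum_nonneg fun m _ =>
    mul_nonneg (norm_nonneg _) (div_nonneg (abs_nonneg _) (gapE_pos hmono m).le)
  have hb : ∀ n : ℕ,
      ‖∑ m ∈ t, if m = n then 0
        else b m / ((((E n)⁻¹ : ℝ) : ℂ) - (((E m)⁻¹ : ℝ) : ℂ))‖ ≤ C * |E n| := by
    intro n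
    calc ‖∑ m ∈ t, if m = n then 0
        else b m / ((((E n)⁻¹ : ℝ) : ℂ) - (((E m)⁻¹ : ℝ) : ℂ))‖
        ≤ ∑ m ∈ t, ‖if m = n then (0 : ℂ)
            else b m / ((((E n)⁻¹ : ℝ) : ℂ) - (((E m)⁻¹ : ℝ) : ℂ))‖ := norm_sum_le _ _
      _ ≤ ∑ m ∈ t, ‖b m‖ * (|E m| / gapE E m) * |E n| := by
          refine Finset.sum_le_sum fun m _ => ?_
          rcases eq_or_ne m n with h | h
          · simp only [if_pos h, norm_zero]
            exact mul_nonneg (mul_nonneg (norm_nonneg _)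
              (div_nonneg (abs_nonneg _) (gapE_pos hmono m).le)) (abs_nonneg _)
          · rw [if_neg h]
            exact term_bound hmono hneg b (Ne.symm h)
      _ = C * |E n| := by rw [hC, Finset.sum_mul]
  refine Summable.of_nonneg_of_le (fun n => sq_nonneg _) (fun n => ?_) (hsum.mul_left (C ^ 2))
  calc ‖∑ m ∈ t, if m = n then 0
        else b m / ((((E n)⁻¹ : ℝ) : ℂ) - (((E m)⁻¹ : ℝ) : ℂ))‖ ^ 2
      ≤ (C * |E n|) ^ 2 := by
        have := hb n
        nlinarith [norm_nonneg (∑ m ∈ t, if m = n then 0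
          else b m / ((((E n)⁻¹ : ℝ) : ℂ) - (((E m)⁻¹ : ℝ) : ℂ)))]
    _ = C ^ 2 * E n ^ 2 := by rw [mul_pow, sq_abs]

/-- ℓ² summability of the time operator coefficients -/
lemma coeff_l2 (hmono : StrictMono E) (hneg : ∀ n, E n < 0)
    (hsum : Summable fun n : ℕ => (E n) ^ 2) (φ : ℋ) (t : Finset ℕ)
    (ht : ∀ m ∉ t, ⟪e m, φ⟫_ℂ = 0) :
    Summable fun n : ℕ => ‖timeOpCoeff e (fun k => (E k)⁻¹) φ n‖ ^ 2 := by
  refine (l2_coeff hmono hneg hsum (fun m => ⟪e m, φ⟫_ℂ) t).congr fun n => ?_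
  rw [coeff_formula e _ φ n t ht]

lemma summable_coeff_smul (hmono : StrictMono E) (hneg : ∀ n, E n < 0)
    (hsum : Summable fun n : ℕ => (E n) ^ 2) (φ : ℋ) (t : Finset ℕ)
    (ht : ∀ m ∉ t, ⟪e m, φ⟫_ℂ = 0) :
    Summable fun n : ℕ => timeOpCoeff e (fun k => (E k)⁻¹) φ n • e n :=
  summable_smul_of_l2 e _ (coeff_l2 e hmono hneg hsum φ t ht)

lemma inner_timeOp (hmono : StrictMono E) (hneg : ∀ n, E n < 0)
    (hsum : Summable fun n : ℕ => (E n) ^ 2) (φ : ℋ) (t : Finset ℕ)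
    (ht : ∀ m ∉ t, ⟪e m, φ⟫_ℂ = 0) (k : ℕ) :
    ⟪e k, timeOp e (fun k => (E k)⁻¹) φ⟫_ℂ
      = Complex.I * timeOpCoeff e (fun k => (E k)⁻¹) φ k := by
  rw [timeOp, inner_smul_right,
    inner_tsum_smul e _ (summable_coeff_smul e hmono hneg hsum φ t ht) k]

lemma symm_aux (hmono : StrictMono E) (hneg : ∀ n, E n < 0)
    (hsum : Summable fun n : ℕ => (E n) ^ 2) (φ ψ : ℋ) (s t : Finset ℕ)
    (hs : ∀ m ∉ s, ⟪e m, φ⟫_ℂ = 0) (ht : ∀ m ∉ t, ⟪e m, ψ⟫_ℂ = 0) :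
    ⟪timeOp e (fun k => (E k)⁻¹) φ, ψ⟫_ℂ = ⟪φ, timeOp e (fun k => (E k)⁻¹) ψ⟫_ℂ := by
  classical
  set lam : ℕ → ℝ := fun k => (E k)⁻¹ with hlam
  set a : ℕ → ℂ := fun m => ⟪e m, φ⟫_ℂ with ha
  set b : ℕ → ℂ := fun m => ⟪e m, ψ⟫_ℂ with hb
  -- left side
  have hL : ⟪timeOp e lam φ, ψ⟫_ℂ
      = (starRingEnd ℂ) (Complex.I * ∑ n ∈ t, timeOpCoeff e lam φ n * ((starRingEnd ℂ) (b n))) := by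
    rw [← inner_conj_symm, timeOp, inner_smul_right]
    congr 1
    congr 1
    rw [show (⟪ψ, ∑' n : ℕ, timeOpCoeff e lam φ n • e n⟫_ℂ)
        = (innerSL ℂ ψ) (∑' n : ℕ, timeOpCoeff e lam φ n • e n) from rfl,
      (innerSL ℂ ψ).map_tsum (summable_coeff_smul e hmono hneg hsum φ s hs)]
    rw [tsum_eq_sum (s := t) (fun n hn => by
      simp only [innerSL_apply_apply, inner_smul_right, ← inner_conj_symm ψ (e n), ← hb, ht n hn,
        map_zero, mul_zero])]
    refine Finset.sum_congr rfl fun n _ => ?_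
    simp only [innerSL_apply_apply, inner_smul_right, ← inner_conj_symm ψ (e n), ← hb]
    rfl
  -- right side
  have hR : ⟪φ, timeOp e lam ψ⟫_ℂ
      = Complex.I * ∑ n ∈ s, timeOpCoeff e lam ψ n * ((starRingEnd ℂ) (a n)) := by
    rw [timeOp, inner_smul_right]
    congr 1
    rw [show (⟪φ, ∑' n : ℕ, timeOpCoeff e lam ψ n • e n⟫_ℂ)
        = (innerSL ℂ φ) (∑' n : ℕ, timeOpCoeff e lam ψ n • e n) from rfl,
      (innerSL ℂ φ).map_tsum (summable_coeff_smul e hmono hneg hsum ψ t ht)]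
    rw [tsum_eq_sum (s := s) (fun n hn => by
      simp only [innerSL_apply_apply, inner_smul_right, ← inner_conj_symm φ (e n), ← ha, hs n hn,
        map_zero, mul_zero])]
    refine Finset.sum_congr rfl fun n _ => ?_
    simp only [innerSL_apply_apply, inner_smul_right, ← inner_conj_symm φ (e n), ← ha]
    rfl
  rw [hL, hR]
  -- expand conjugation and the coefficients
  rw [map_mul, Complex.conj_I, map_sum]
  have hLcoeff : ∀ n ∈ t, (starRingEnd ℂ) (timeOpCoeff e lam φ n * (starRingEnd ℂ) (b n))
      = (∑ m ∈ s, if m = n then 0 else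
          (starRingEnd ℂ) (a m) / (((lam n : ℝ) : ℂ) - ((lam m : ℝ) : ℂ))) * b n := by
    intro n _
    rw [map_mul, RingHomCompTriple.comp_apply, RingHom.id_apply,
      coeff_formula e lam φ n s hs, map_sum]
    congr 1
    refine Finset.sum_congr rfl fun m _ => ?_
    rcases eq_or_ne m n with h | h
    · simp [h]
    · rw [if_neg h, if_neg h, map_div₀, ← Complex.ofReal_sub, Complex.conj_ofReal]
  rw [Finset.sum_congr rfl hLcoeff]
  have hRcoeff : ∀ n ∈ s, timeOpCoeff e lam ψ n * (starRingEnd ℂ) (a n)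
      = (∑ m ∈ t, if m = n then 0 else
          b m / (((lam n : ℝ) : ℂ) - ((lam m : ℝ) : ℂ))) * (starRingEnd ℂ) (a n) := by
    intro n _
    rw [coeff_formula e lam ψ n t ht]
  rw [Finset.sum_congr rfl hRcoeff]
  -- now a purely algebraic identity about finite double sums
  simp only [Finset.mul_sum, Finset.sum_mul]
  rw [Finset.sum_comm]
  refine Finset.sum_congr rfl fun p hp => Finset.sum_congr rfl fun q hq => ?_
  rcases eq_or_ne p q with h | h
  · subst h; simp
  · rw [if_neg h, if_neg (Ne.symm h)]
    have hd : ((lam p : ℝ) : ℂ) - ((lam q : ℝ) : ℂ) = -(((lam q : ℝ) : ℂ) - ((lam p : ℝ) : ℂ)) := by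
      ring
    rw [hd, div_neg]
    ring

lemma ccr_aux (hmono : StrictMono E) (hneg : ∀ n, E n < 0)
    (hsum : Summable fun n : ℕ => (E n) ^ 2) (ψ : ℋ) (t : Finset ℕ)
    (ht : ∀ m ∉ t, ⟪e m, ψ⟫_ℂ = 0) (hzero : ∑ m ∈ t, ⟪e m, ψ⟫_ℂ = 0) :
    timeOp e (fun k => (E k)⁻¹) ψ ∈ diagDom e (fun k => (E k)⁻¹) ∧
    diagOp e (fun k => (E k)⁻¹) ψ ∈ Submodule.span ℂ (Set.range e) ∧
    diagOp e (fun k => (E k)⁻¹) (timeOp e (fun k => (E k)⁻¹) ψ)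
      - timeOp e (fun k => (E k)⁻¹) (diagOp e (fun k => (E k)⁻¹) ψ)
      = -Complex.I • ψ := by
  classical
  set lam : ℕ → ℝ := fun k => (E k)⁻¹ with hlam
  set b : ℕ → ℂ := fun m => ⟪e m, ψ⟫_ℂ with hb
  -- the diagonal operator applied to ψ
  have hKsummand : ∀ n ∉ t, ((lam n : ℂ) * ⟪e n, ψ⟫_ℂ) • e n = 0 := fun n hn => by
    rw [ht n hn, mul_zero, zero_smul]
  have hKsum : Summable fun n : ℕ => ((lam n : ℂ) * ⟪e n, ψ⟫_ℂ) • e n :=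
    summable_of_ne_finset_zero hKsummand
  have hKcoeff : ∀ k, ⟪e k, diagOp e lam ψ⟫_ℂ = (lam k : ℂ) * b k := fun k => by
    rw [diagOp, inner_tsum_smul e _ hKsum k]
  have hKft : ∀ m ∉ t, ⟪e m, diagOp e lam ψ⟫_ℂ = 0 := fun m hm => by
    rw [hKcoeff m, hb]
    simp only [ht m hm, mul_zero]
  -- span membership of Kψ
  have hKspan : diagOp e lam ψ ∈ Submodule.span ℂ (Set.range e) := by
    rw [diagOp, tsum_eq_sum (s := t) hKsummand]
    exact Submodule.sum_mem _ fun n _ => Submodule.smul_mem _ _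
      (Submodule.subset_span ⟨n, rfl⟩)
  -- coefficients
  set c : ℕ → ℂ := timeOpCoeff e lam ψ with hc
  set c' : ℕ → ℂ := timeOpCoeff e lam (diagOp e lam ψ) with hc'
  have hcf : ∀ n, c n = ∑ m ∈ t, if m = n then 0
      else b m / (((lam n : ℝ) : ℂ) - ((lam m : ℝ) : ℂ)) := fun n =>
    coeff_formula e lam ψ n t ht
  have hcf' : ∀ n, c' n = ∑ m ∈ t, if m = n then 0
      else ((lam m : ℂ) * b m) / (((lam n : ℝ) : ℂ) - ((lam m : ℝ) : ℂ)) := fun n => by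
    rw [hc', coeff_formula e lam _ n t hKft]
    exact Finset.sum_congr rfl fun m _ => by rw [hKcoeff m]
  have hcl2 : Summable fun n => ‖c n‖ ^ 2 := coeff_l2 e hmono hneg hsum ψ t ht
  have hc'l2 : Summable fun n => ‖c' n‖ ^ 2 :=
    coeff_l2 e hmono hneg hsum (diagOp e lam ψ) t hKft
  have hSc : Summable fun n => c n • e n := summable_smul_of_l2 e c hcl2
  have hSc' : Summable fun n => c' n • e n := summable_smul_of_l2 e c' hc'l2
  have hTcoeff : ∀ k, ⟪e k, timeOp e lam ψ⟫_ℂ = Complex.I * c k :=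
    inner_timeOp e hmono hneg hsum ψ t ht
  -- key algebraic identity
  have hbne : ∀ n, n ∉ t → b n = 0 := fun n hn => ht n hn
  have hkey : ∀ n, (lam n : ℂ) * c n = c' n - b n := by
    intro n
    rw [hcf n, hcf' n, Finset.mul_sum]
    have hterm : ∀ m ∈ t, (lam n : ℂ) * (if m = n then 0
        else b m / (((lam n : ℝ) : ℂ) - ((lam m : ℝ) : ℂ)))
        = (if m = n then 0
            else ((lam m : ℂ) * b m) / (((lam n : ℝ) : ℂ) - ((lam m : ℝ) : ℂ)))
          + (if m = n then 0 else b m) := by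
      intro m _
      rcases eq_or_ne m n with h | h
      · simp [h]
      · rw [if_neg h, if_neg h, if_neg h]
        have hd : (((lam n : ℝ) : ℂ)) - ((lam m : ℝ) : ℂ) ≠ 0 :=
          denom_ne_zero hmono (Ne.symm h)
        field_simp
        ring
    rw [Finset.sum_congr rfl hterm, Finset.sum_add_distrib]
    have h2 : ∑ m ∈ t, (if m = n then 0 else b m) = -(b n) := by
      have h3 : ∀ m ∈ t, (if m = n then (0 : ℂ) else b m)
          = b m - (if m = n then b m else 0) := by
        intro m _
        rcases eq_or_ne m n with h | h <;> simp [h]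
      rw [Finset.sum_congr rfl h3, Finset.sum_sub_distrib, ← hb, hzero, zero_sub,
        Finset.sum_ite_eq' t n b]
      by_cases hn : n ∈ t
      · rw [if_pos hn]
      · rw [if_neg hn, hbne n hn]
    rw [h2]
    ring
  -- domain membership
  have hdom : timeOp e lam ψ ∈ diagDom e lam := by
    have hbl2 : Summable fun n => ‖b n‖ ^ 2 :=
      summable_of_ne_finset_zero (s := t) fun n hn => by rw [hbne n hn]; simp
    have hsum2 : Summable fun n => 2 * (‖c' n‖ ^ 2 + ‖b n‖ ^ 2) :=
      (hc'l2.add hbl2).mul_left 2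
    refine Summable.of_nonneg_of_le (fun n => ?_) (fun n => ?_) hsum2
    · positivity
    · rw [hTcoeff n, norm_mul, Complex.norm_I, one_mul]
      have h4 : (lam n) ^ 2 * ‖c n‖ ^ 2 = ‖(lam n : ℂ) * c n‖ ^ 2 := by
        rw [norm_mul, Complex.norm_real, Real.norm_eq_abs, mul_pow, sq_abs]
      rw [h4, hkey n]
      have h5 := norm_sub_le (c' n) (b n)
      nlinarith [norm_nonneg (c' n - b n), norm_nonneg (c' n), norm_nonneg (b n),
        mul_self_le_mul_self (norm_nonneg (c' n - b n)) h5,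
        sq_nonneg (‖c' n‖ - ‖b n‖)]
  refine ⟨hdom, hKspan, ?_⟩
  -- the commutation relation
  have hfun : ∀ n : ℕ, ((lam n : ℂ) * ⟪e n, timeOp e lam ψ⟫_ℂ) • e n
      = (Complex.I * c' n) • e n - (Complex.I * b n) • e n := by
    intro n
    rw [hTcoeff n, show (lam n : ℂ) * (Complex.I * c n) = Complex.I * ((lam n : ℂ) * c n) by ring,
      hkey n, mul_sub, sub_smul]
  have hS1 : Summable fun n => (Complex.I * c' n) • e n := by
    refine (hSc'.const_smul Complex.I).congr fun n => ?_
    rw [smul_smul]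
  have hS2 : Summable fun n => (Complex.I * b n) • e n := by
    refine summable_of_ne_finset_zero (s := t) fun n hn => ?_
    rw [hbne n hn, mul_zero, zero_smul]
  have hT1 : (∑' n, (Complex.I * c' n) • e n) = Complex.I • ∑' n, c' n • e n := by
    rw [show (fun n => (Complex.I * c' n) • e n) = fun n => Complex.I • (c' n • e n) from
      funext fun n => (smul_smul _ _ _).symm]
    exact Summable.tsum_const_smul Complex.I hSc'
  have hT2 : (∑' n, (Complex.I * b n) • e n) = Complex.I • ψ := by
    have hrepr : (∑' n, b n • e n) = ψ := by
      have := (e.hasSum_repr ψ).tsum_eq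
      rw [← this]
      exact tsum_congr fun n => by rw [e.repr_apply_apply, hb]
    rw [show (fun n => (Complex.I * b n) • e n) = fun n => Complex.I • (b n • e n) from
      funext fun n => (smul_smul _ _ _).symm, ← hrepr]
    exact Summable.tsum_const_smul Complex.I (summable_of_ne_finset_zero (s := t)
      (fun n hn => by rw [hbne n hn, zero_smul]))
  have hdiag : diagOp e lam (timeOp e lam ψ)
      = Complex.I • (∑' n, c' n • e n) - Complex.I • ψ := by
    rw [diagOp, tsum_congr hfun, Summable.tsum_sub hS1 hS2, hT1, hT2]
  have hTK : timeOp e lam (diagOp e lam ψ) = Complex.I • (∑' n, c' n • e n) := rfl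
  rw [hdiag, hTK, neg_smul]
  abel

end Main

lemma finsupp_sumzero_of_mem {ℋ : Type*} [NormedAddCommGroup ℋ] [InnerProductSpace ℂ ℋ]
    [CompleteSpace ℋ] (e : HilbertBasis ℕ ℂ ℋ) {ψ : ℋ}
    (hψ : ψ ∈ Submodule.span ℂ {x : ℋ | ∃ n m : ℕ, x = e n - e m}) :
    ∃ t : Finset ℕ, (∀ m ∉ t, ⟪e m, ψ⟫_ℂ = 0) ∧ ∑ m ∈ t, ⟪e m, ψ⟫_ℂ = 0 := by
  classical
  induction hψ using Submodule.span_induction with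
  | mem x hx =>
    obtain ⟨n, m, rfl⟩ := hx
    refine ⟨{n, m}, fun k hk => ?_, ?_⟩
    · have hkn : k ≠ n := fun h => hk (by simp [h])
      have hkm : k ≠ m := fun h => hk (by simp [h])
      rw [inner_sub_right, inner_basis e, inner_basis e, if_neg hkn, if_neg hkm, sub_zero]
    · have : ∀ k ∈ ({n, m} : Finset ℕ), ⟪e k, e n - e m⟫_ℂ
          = (if k = n then (1 : ℂ) else 0) - (if k = m then (1 : ℂ) else 0) := by
        intro k _
        rw [inner_sub_right, inner_basis e, inner_basis e]
      rw [Finset.sum_congr rfl this, Finset.sum_sub_distrib]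
      rw [Finset.sum_ite_eq' ({n, m} : Finset ℕ) n (fun _ => (1 : ℂ)),
        Finset.sum_ite_eq' ({n, m} : Finset ℕ) m (fun _ => (1 : ℂ))]
      simp
  | zero => exact ⟨∅, fun m _ => by simp, by simp⟩
  | add x y _ _ hx hy =>
    obtain ⟨t1, h1, h1z⟩ := hx
    obtain ⟨t2, h2, h2z⟩ := hy
    refine ⟨t1 ∪ t2, fun m hm => ?_, ?_⟩
    · rw [inner_add_right, h1 m (fun h => hm (Finset.mem_union_left _ h)),
        h2 m (fun h => hm (Finset.mem_union_right _ h)), add_zero]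
    · have : ∑ m ∈ t1 ∪ t2, ⟪e m, x + y⟫_ℂ
          = ∑ m ∈ t1 ∪ t2, ⟪e m, x⟫_ℂ + ∑ m ∈ t1 ∪ t2, ⟪e m, y⟫_ℂ := by
        rw [← Finset.sum_add_distrib]
        exact Finset.sum_congr rfl fun m _ => inner_add_right _ _ _
      rw [this, ← Finset.sum_subset (Finset.subset_union_left (s₂ := t2)) (fun m _ hm => h1 m hm),
        ← Finset.sum_subset (Finset.subset_union_right (s₁ := t1)) (fun m _ hm => h2 m hm),
        h1z, h2z, add_zero]
  | smul a x _ hx =>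
    obtain ⟨t, h, hz⟩ := hx
    refine ⟨t, fun m hm => by rw [inner_smul_right, h m hm, mul_zero], ?_⟩
    have : ∀ m ∈ t, ⟪e m, a • x⟫_ℂ = a * ⟪e m, x⟫_ℂ := fun m _ => inner_smul_right _ _ _
    rw [Finset.sum_congr rfl this, ← Finset.mul_sum, hz, mul_zero]


/-- for `E_1 < E_2 < ⋯ < 0` with `∑ E_n² < ∞`, the operator
`T_d φ = i ∑_n (∑_{m≠n} ⟨e_m,φ⟩/(E_n⁻¹ - E_m⁻¹)) e_n` is well defined on `𝓕 = span{e_n}`,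
symmetric there, and satisfies the CCR `K T_d ψ - T_d K ψ = -iψ` on `ℰ = span{e_n - e_m}`
with `K = diag(E_n⁻¹)`. -/
theorem timeOp_inverse_ccr
    {ℋ : Type*} [NormedAddCommGroup ℋ] [InnerProductSpace ℂ ℋ] [CompleteSpace ℋ]
    (e : HilbertBasis ℕ ℂ ℋ) (E : ℕ → ℝ)
    (hmono : StrictMono E) (hneg : ∀ n, E n < 0)
    (hsum : Summable fun n : ℕ => (E n) ^ 2) :
    (∀ φ ∈ Submodule.span ℂ (Set.range e),
      Summable fun n : ℕ => ‖timeOpCoeff e (fun k => (E k)⁻¹) φ n‖ ^ 2) ∧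
    (∀ φ ∈ Submodule.span ℂ (Set.range e), ∀ ψ ∈ Submodule.span ℂ (Set.range e),
      ⟪timeOp e (fun k => (E k)⁻¹) φ, ψ⟫_ℂ = ⟪φ, timeOp e (fun k => (E k)⁻¹) ψ⟫_ℂ) ∧
    (∀ ψ ∈ Submodule.span ℂ {x : ℋ | ∃ n m : ℕ, x = e n - e m},
      timeOp e (fun k => (E k)⁻¹) ψ ∈ diagDom e (fun k => (E k)⁻¹) ∧
      diagOp e (fun k => (E k)⁻¹) ψ ∈ Submodule.span ℂ (Set.range e) ∧
      diagOp e (fun k => (E k)⁻¹) (timeOp e (fun k => (E k)⁻¹) ψ)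
        - timeOp e (fun k => (E k)⁻¹) (diagOp e (fun k => (E k)⁻¹) ψ)
        = -Complex.I • ψ) := by
  refine ⟨fun φ hφ => ?_, fun φ hφ ψ hψ => ?_, fun ψ hψ => ?_⟩
  · obtain ⟨t, ht⟩ := finsupp_of_mem_span e hφ
    exact coeff_l2 e hmono hneg hsum φ t ht
  · obtain ⟨s, hs⟩ := finsupp_of_mem_span e hφ
    obtain ⟨t, ht⟩ := finsupp_of_mem_span e hψ
    exact symm_aux e hmono hneg hsum φ ψ s t hs ht
  · obtain ⟨t, ht, htz⟩ := finsupp_sumzero_of_mem e hψ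
    exact ccr_aux e hmono hneg hsum ψ t ht htz
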